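/- Let q be a complex number with |q| < 1, and for each complex number a define E_1(a) := ∑_{n=0}^∞ (a^(2n) q^(2n(n+1)) / (q^2; q^2)_n) · ∑_{m=0}^∞ a^m q^(m(m+2n+1)) / (q; q)_m and E_3(a) := ∑_{n=0}^∞ (a^(2n) q^(2n^2) / (q^2; q^2)_n) · ∑_{m=0}^∞ a^m q^(m(m+2n)) / (q; q)_m. Then for every complex a, E_3(a) = E_1(a) + a q (1 + a q) E_1(a q). -/

import Mathlib

/-- The finite q-Pochhammer symbol `(a; q)_n = ∏_{h=0}^{n-1} (1 - a q^h)`. -/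
noncomputable def qPoch (a q : ℂ) (n : ℕ) : ℂ := ∏ h ∈ Finset.range n, (1 - a * q ^ h)

/-- `E₁(a) = ∑_{n≥0} (a^{2n} q^{2n(n+1)} / (q²;q²)_n) ∑_{m≥0} a^m q^{m(m+2n+1)} / (q;q)_m`. -/
noncomputable def E₁ (q a : ℂ) : ℂ :=
  ∑' n : ℕ, (a ^ (2 * n) * q ^ (2 * n * (n + 1)) / qPoch (q ^ 2) (q ^ 2) n) *
      ∑' m : ℕ, a ^ m * q ^ (m * (m + 2 * n + 1)) / qPoch q q m

/-- `E₃(a) = ∑_{n≥0} (a^{2n} q^{2n²} / (q²;q²)_n) ∑_{m≥0} a^m q^{m(m+2n)} / (q;q)_m`. -/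
noncomputable def E₃ (q a : ℂ) : ℂ :=
  ∑' n : ℕ, (a ^ (2 * n) * q ^ (2 * n ^ 2) / qPoch (q ^ 2) (q ^ 2) n) *
      ∑' m : ℕ, a ^ m * q ^ (m * (m + 2 * n)) / qPoch q q m

/-!
Write `G(x) = ∑ₘ xᵐ q^{m²} / (q;q)ₘ` and `Pₙ = a^{2n} q^{2n²} / (q²;q²)ₙ`. Then
`E₃(a) = ∑ Pₙ G(aq^{2n})`, `E₁(a) = ∑ Pₙ q^{2n} G(aq^{2n+1})` and `E₁(aq) = ∑ Pₙ q^{4n} G(aq^{2n+2})`.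
Since `Pₙ₊₁ (1 - q^{2n+2}) = a² q^{4n+2} Pₙ`, an index shift gives
`∑ Pₙ (1 - q^{2n}) cₙ = a²q² ∑ Pₙ q^{4n} cₙ₊₁` for every bounded `c`. The same shift on the terms
of `G` itself, with `c` constant, is the Rogers–Ramanujan recurrence `G(x) = G(xq) + xq G(xq²)`.
Expanding with the recurrence twice reduces the theorem to the shift identity for
`cₙ = G(aq^{2n+1}) + aq^{2n+1} G(aq^{2n+2})`, for which `cₙ₊₁ = G(aq^{2n+2})`.
-/

open Filter Topology

noncomputable def rogersRamanujanTerm (q x : ℂ) (m : ℕ) : ℂ := x ^ m * q ^ (m * m) / qPoch q q m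

noncomputable def rogersRamanujan (q x : ℂ) : ℂ := ∑' m, rogersRamanujanTerm q x m

lemma qPoch_succ (a q : ℂ) (n : ℕ) : qPoch a q (n + 1) = qPoch a q n * (1 - a * q ^ n) :=
  Finset.prod_range_succ _ n

lemma norm_pow_le_one {x : ℂ} (hx : ‖x‖ ≤ 1) (n : ℕ) : ‖x ^ n‖ ≤ 1 := by
  rw [norm_pow]
  exact pow_le_one₀ (norm_nonneg x) hx

lemma norm_one_sub_pow_le_two {q : ℂ} (hq : ‖q‖ ≤ 1) (n : ℕ) : ‖1 - q ^ n‖ ≤ 2 :=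
  (norm_sub_le _ _).trans (by rw [norm_one]; linarith [norm_pow_le_one hq n])

lemma one_sub_norm_le_norm_one_sub_pow {q : ℂ} (hq : ‖q‖ < 1) {n : ℕ} (hn : n ≠ 0) :
    1 - ‖q‖ ≤ ‖1 - q ^ n‖ := by
  calc 1 - ‖q‖ ≤ 1 - ‖q‖ ^ n := by gcongr; exact pow_le_of_le_one (norm_nonneg q) hq.le hn
    _ = ‖(1 : ℂ)‖ - ‖q ^ n‖ := by rw [norm_one, norm_pow]
    _ ≤ ‖1 - q ^ n‖ := norm_sub_norm_le _ _

lemma one_sub_pow_ne_zero {q : ℂ} (hq : ‖q‖ < 1) {n : ℕ} (hn : n ≠ 0) : 1 - q ^ n ≠ 0 :=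
  norm_pos_iff.1 ((sub_pos.2 hq).trans_le (one_sub_norm_le_norm_one_sub_pow hq hn))

lemma qPoch_self_ne_zero {q : ℂ} (hq : ‖q‖ < 1) (n : ℕ) : qPoch q q n ≠ 0 := by
  refine Finset.prod_ne_zero_iff.2 fun h _ => ?_
  rw [← pow_succ']
  exact one_sub_pow_ne_zero hq h.succ_ne_zero

lemma rogersRamanujanTerm_mul (q x y : ℂ) (m : ℕ) :
    rogersRamanujanTerm q (x * y) m = rogersRamanujanTerm q x m * y ^ m := by
  simp only [rogersRamanujanTerm, mul_pow]
  ring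

lemma rogersRamanujanTerm_succ_mul {q : ℂ} (hq : ‖q‖ < 1) (x : ℂ) (m : ℕ) :
    rogersRamanujanTerm q x (m + 1) * (1 - q ^ (m + 1)) =
      rogersRamanujanTerm q x m * (x * q ^ (2 * m + 1)) := by
  have h₁ := one_sub_pow_ne_zero hq m.succ_ne_zero
  have h₂ := qPoch_self_ne_zero hq m
  simp only [rogersRamanujanTerm, qPoch_succ, ← pow_succ']
  field_simp
  ring

lemma norm_rogersRamanujanTerm_succ_le {q : ℂ} (hq : ‖q‖ < 1) (x : ℂ) (m : ℕ) :
    ‖rogersRamanujanTerm q x (m + 1)‖ ≤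
      ‖x‖ * ‖q‖ ^ (2 * m + 1) / (1 - ‖q‖) * ‖rogersRamanujanTerm q x m‖ := by
  have h := congrArg norm (rogersRamanujanTerm_succ_mul hq x m)
  rw [norm_mul, norm_mul, norm_mul, norm_pow] at h
  have hpos : 0 < 1 - ‖q‖ := sub_pos.2 hq
  rw [div_mul_eq_mul_div, le_div_iff₀ hpos, mul_comm (‖x‖ * _), ← h]
  gcongr
  exact one_sub_norm_le_norm_one_sub_pow hq m.succ_ne_zero

lemma summable_rogersRamanujanTerm {q : ℂ} (hq : ‖q‖ < 1) (x : ℂ) :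
    Summable (rogersRamanujanTerm q x) := by
  have hρ : Tendsto (fun m : ℕ => ‖x‖ * ‖q‖ ^ (2 * m + 1) / (1 - ‖q‖)) atTop (𝓝 0) := by
    have h := (tendsto_pow_atTop_nhds_zero_of_lt_one (norm_nonneg q) hq).comp
      (strictMono_mul_left_of_pos two_pos |>.add_const 1).tendsto_atTop
    simpa using (h.const_mul ‖x‖).div_const (1 - ‖q‖)
  refine summable_of_ratio_norm_eventually_le (r := 1 / 2) (by norm_num) ?_
  filter_upwards [hρ.eventually (ge_mem_nhds (by norm_num : (0 : ℝ) < 1 / 2))] with m hm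
  exact (norm_rogersRamanujanTerm_succ_le hq x m).trans (by gcongr)

lemma summable_rogersRamanujanTerm_mul {q : ℂ} (hq : ‖q‖ < 1) (x : ℂ) {c : ℕ → ℂ} {C : ℝ}
    (hc : ∀ n, ‖c n‖ ≤ C) : Summable fun n => rogersRamanujanTerm q x n * c n :=
  .of_norm_bounded ((summable_rogersRamanujanTerm hq x).norm.mul_right C)
    fun n => norm_mul_le_of_le le_rfl (hc n)

lemma norm_rogersRamanujan_mul_le {q : ℂ} (hq : ‖q‖ < 1) (x : ℂ) {y : ℂ} (hy : ‖y‖ ≤ 1) :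
    ‖rogersRamanujan q (x * y)‖ ≤ ∑' m, ‖rogersRamanujanTerm q x m‖ := by
  have hy' := norm_pow_le_one hy
  simp only [rogersRamanujan, rogersRamanujanTerm_mul]
  refine (norm_tsum_le_tsum_norm ?_).trans (Summable.tsum_le_tsum (fun m => ?_) ?_ ?_)
  · exact (summable_rogersRamanujanTerm_mul hq x hy').norm
  · exact norm_mul_le_of_le le_rfl (hy' m) |>.trans_eq (mul_one _)
  · exact (summable_rogersRamanujanTerm_mul hq x hy').norm
  · exact (summable_rogersRamanujanTerm hq x).norm

lemma tsum_rogersRamanujanTerm_mul_one_sub_pow {q : ℂ} (hq : ‖q‖ < 1) (x : ℂ) {c : ℕ → ℂ}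
    {C : ℝ} (hc : ∀ n, ‖c n‖ ≤ C) :
    ∑' n, rogersRamanujanTerm q x n * ((1 - q ^ n) * c n) =
      x * q * ∑' n, rogersRamanujanTerm q x n * (q ^ (2 * n) * c (n + 1)) := by
  have hsum := summable_rogersRamanujanTerm_mul hq x
    fun n => norm_mul_le_of_le (norm_one_sub_pow_le_two hq.le n) (hc n)
  rw [hsum.tsum_eq_zero_add, ← tsum_mul_left]
  simp only [pow_zero, sub_self, zero_mul, mul_zero, zero_add]
  refine tsum_congr fun n => ?_
  rw [← mul_assoc, rogersRamanujanTerm_succ_mul hq]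
  ring

theorem rogersRamanujan_eq_add {q : ℂ} (hq : ‖q‖ < 1) (x : ℂ) :
    rogersRamanujan q x = rogersRamanujan q (x * q) + x * q * rogersRamanujan q (x * q ^ 2) := by
  have h := tsum_rogersRamanujanTerm_mul_one_sub_pow hq x (c := fun _ => 1) (C := 1) (by simp)
  simp only [mul_one] at h
  rw [← sub_eq_iff_eq_add', rogersRamanujan, rogersRamanujan, rogersRamanujan,
    ← (summable_rogersRamanujanTerm hq x).tsum_sub (summable_rogersRamanujanTerm hq _)]
  simp only [rogersRamanujanTerm_mul, mul_sub, mul_one, ← pow_mul] at h ⊢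
  exact h

lemma E₃_eq_tsum (q a : ℂ) :
    E₃ q a = ∑' n, rogersRamanujanTerm (q ^ 2) (a ^ 2) n * rogersRamanujan q (a * q ^ (2 * n)) := by
  refine tsum_congr fun n => congrArg₂ _ ?_ (tsum_congr fun m => ?_) <;>
  · simp only [rogersRamanujanTerm, mul_pow, ← pow_mul]
    ring_nf

lemma E₁_eq_tsum (q a : ℂ) :
    E₁ q a = ∑' n, rogersRamanujanTerm (q ^ 2) (a ^ 2) n *
      (q ^ (2 * n) * rogersRamanujan q (a * q ^ (2 * n + 1))) := by
  simp only [E₁, rogersRamanujan, ← mul_assoc]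
  refine tsum_congr fun n => congrArg₂ _ ?_ (tsum_congr fun m => ?_) <;>
  · simp only [rogersRamanujanTerm, mul_pow, ← pow_mul]
    ring_nf

lemma E₁_mul_q_eq_tsum (q a : ℂ) :
    E₁ q (a * q) = ∑' n, rogersRamanujanTerm (q ^ 2) (a ^ 2) n *
      (q ^ (4 * n) * rogersRamanujan q (a * q ^ (2 * n + 2))) := by
  simp only [E₁, rogersRamanujan, ← mul_assoc]
  refine tsum_congr fun n => congrArg₂ _ ?_ (tsum_congr fun m => ?_) <;>
  · simp only [rogersRamanujanTerm, mul_pow, ← pow_mul]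
    ring_nf

lemma tsum_qdifference_of_recurrence {q a : ℂ} (hq : ‖q‖ < 1) {S : ℕ → ℂ} {B : ℝ}
    (hB : ∀ k, ‖S k‖ ≤ B) (hS : ∀ k, S k = S (k + 1) + a * q ^ (k + 1) * S (k + 2)) :
    ∑' n, rogersRamanujanTerm (q ^ 2) (a ^ 2) n * S (2 * n) =
      ∑' n, rogersRamanujanTerm (q ^ 2) (a ^ 2) n * (q ^ (2 * n) * S (2 * n + 1)) +
        a * q * (1 + a * q) *
          ∑' n, rogersRamanujanTerm (q ^ 2) (a ^ 2) n * (q ^ (4 * n) * S (2 * n + 2)) := by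
  have hq₂ : ‖q ^ 2‖ < 1 := by rw [norm_pow]; exact pow_lt_one₀ (norm_nonneg q) hq two_ne_zero
  have hpow := norm_pow_le_one hq.le
  set c : ℕ → ℂ := fun n => S (2 * n + 1) + a * q ^ (2 * n + 1) * S (2 * n + 2)
  have hc : ∀ n, ‖c n‖ ≤ B + ‖a‖ * 1 * B := fun n =>
    norm_add_le_of_le (hB _) (norm_mul_le_of_le (norm_mul_le_of_le le_rfl (hpow _)) (hB _))
  have hc_succ (n : ℕ) : c (n + 1) = S (2 * n + 2) := by
    simp only [c, hS (2 * n + 2)]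
    ring_nf
  have htel := tsum_rogersRamanujanTerm_mul_one_sub_pow hq₂ (a ^ 2) hc
  simp only [hc_succ, ← pow_mul, show ∀ n, 2 * (2 * n) = 4 * n by lia] at htel
  set P := rogersRamanujanTerm (q ^ 2) (a ^ 2)
  have hsplit (n : ℕ) : P n * S (2 * n) = P n * (q ^ (2 * n) * S (2 * n + 1)) +
      (P n * ((1 - q ^ (2 * n)) * c n) + a * q * (P n * (q ^ (4 * n) * S (2 * n + 2)))) := by
    simp only [c, hS (2 * n)]
    ring_nf
  have hsum₁ := summable_rogersRamanujanTerm_mul hq₂ (a ^ 2) fun n =>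
    norm_mul_le_of_le (hpow (2 * n)) (hB (2 * n + 1))
  have hsum₂ := summable_rogersRamanujanTerm_mul hq₂ (a ^ 2) fun n =>
    norm_mul_le_of_le (norm_one_sub_pow_le_two hq.le (2 * n)) (hc n)
  have hsum₃ := summable_rogersRamanujanTerm_mul hq₂ (a ^ 2) fun n =>
    norm_mul_le_of_le (hpow (4 * n)) (hB (2 * n + 2))
  rw [tsum_congr hsplit, hsum₁.tsum_add (hsum₂.add (hsum₃.mul_left _)),
    hsum₂.tsum_add (hsum₃.mul_left _), htel, tsum_mul_left]
  ring

/-- The key q-difference equation `E₃(a) = E₁(a) + aq(1+aq) E₁(aq)`. -/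
theorem E_qdifference (q : ℂ) (hq : ‖q‖ < 1) (a : ℂ) :
    E₃ q a = E₁ q a + a * q * (1 + a * q) * E₁ q (a * q) := by
  rw [E₃_eq_tsum, E₁_eq_tsum, E₁_mul_q_eq_tsum]
  refine tsum_qdifference_of_recurrence hq
    (fun k => norm_rogersRamanujan_mul_le hq a (norm_pow_le_one hq.le k)) fun k => ?_
  rw [rogersRamanujan_eq_add hq (a * q ^ k)]
  ring_nf
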